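/- arXiv:math/0609562 — 4 statements merged into one kernel-verified Lean document; each statement's English description precedes it below -/
import Mathlib

section
/- Let p be a prime with p ≡ 3 (mod 4), Q ⊂ GF(p)^× the set of quadratic residues and N the set of non-residues, and let S ⊊ GF(p) be a subset with |S| odd (so S^c = GF(p)∖S is non-empty). Then the Hamming weight of the codeword c = (r_N r_S, r_Q r_S) of the QQR code C_NQ satisfies wt(c) = p + Σ_{a∈GF(p)} χ(f_{S^c}(a)) = |X_{S^c}(GF(p))| − 2. -/
open Finset

/-- `r_S = Σ_{i∈S} x^i`, viewed as an element of `R = GF(2)[x]/(x^p-1)`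
(identified with functions `ZMod p → ZMod 2` recording coefficients). -/
def rOf {p : ℕ} (S : Finset (ZMod p)) : ZMod p → ZMod 2 :=
  fun a => if a ∈ S then 1 else 0

/-- Multiplication in `R = GF(2)[x]/(x^p-1)` (cyclic convolution of coefficients). -/
def conv {p : ℕ} [NeZero p] (f g : ZMod p → ZMod 2) : ZMod p → ZMod 2 :=
  fun a => ∑ b : ZMod p, f b * g (a - b)

/-- Hamming weight of an element of `R`. -/
def wt {p : ℕ} [NeZero p] (f : ZMod p → ZMod 2) : ℕ :=
  (Finset.univ.filter fun a => f a ≠ 0).card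

/-- The set `Q` of quadratic residues in `GF(p)ˣ`. -/
def Qset (p : ℕ) [NeZero p] : Finset (ZMod p) :=
  Finset.univ.filter fun a => a ≠ 0 ∧ ∃ b : ZMod p, b ^ 2 = a

/-- The set `N` of quadratic non-residues in `GF(p)ˣ`. -/
def Nset (p : ℕ) [NeZero p] : Finset (ZMod p) :=
  Finset.univ.filter fun a => a ≠ 0 ∧ ¬∃ b : ZMod p, b ^ 2 = a

/-- The character sum `Σ_{a ∈ GF(p)} χ(f_S(a))` where `f_S(x) = Π_{b∈S}(x-b)` and
`χ` is the Legendre character. -/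
def charSum (p : ℕ) [Fact p.Prime] (S : Finset (ZMod p)) : ℤ :=
  ∑ a : ZMod p, quadraticChar (ZMod p) (∏ b ∈ S, (a - b))

/-- `|X_S(GF(p))|`: the number of affine points of `y² = f_S(x)` over `GF(p)`,
plus `2` points at infinity if `|S|` is even and `1` if `|S|` is odd. -/
noncomputable def Xcard (p : ℕ) (S : Finset (ZMod p)) : ℕ :=
  Nat.card {xy : ZMod p × ZMod p // xy.2 ^ 2 = ∏ b ∈ S, (xy.1 - b)} +
    if Even S.card then 2 else 1

/-- The QQR codeword `(r_N r_S, r_Q r_S)`. -/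
def qqr (p : ℕ) [NeZero p] (S : Finset (ZMod p)) :
    (ZMod p → ZMod 2) × (ZMod p → ZMod 2) :=
  (conv (rOf (Nset p)) (rOf S), conv (rOf (Qset p)) (rOf S))

/-- Hamming weight of a length-`2p` vector identified with a pair of elements of `R`. -/
def wt2 {p : ℕ} [NeZero p] (x : (ZMod p → ZMod 2) × (ZMod p → ZMod 2)) : ℕ :=
  wt x.1 + wt x.2

/-- The LQR codeword `c_S = (r_N r_S, r_Q r_S, r_N r_S*, r_Q r_S*)`. -/
def lqr (p : ℕ) [NeZero p] (S : Finset (ZMod p)) :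
    ((ZMod p → ZMod 2) × (ZMod p → ZMod 2)) × ((ZMod p → ZMod 2) × (ZMod p → ZMod 2)) :=
  (qqr p S, qqr p Sᶜ)

/-- Hamming weight of a length-`4p` vector identified with a 4-tuple of elements of `R`. -/
def wt4 {p : ℕ} [NeZero p]
    (x : ((ZMod p → ZMod 2) × (ZMod p → ZMod 2)) × ((ZMod p → ZMod 2) × (ZMod p → ZMod 2))) : ℕ :=
  wt2 x.1 + wt2 x.2

/-!
At a point `a`, let `n` and `q` count the `s ∈ S` with `a - s ∈ N`, resp. `a - s ∈ Q`; the two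
coordinates of the codeword at `a` are `n` and `q` mod 2, and `n + q = |S| - [a ∈ S]`.
If `a ∉ S` this is odd, so exactly one coordinate is `1`, while `f_{Sᶜ}(a) = 0`.
If `a ∈ S` both coordinates equal `n mod 2`, and `χ(f_{Sᶜ}(a)) = (-1)^(|N| - n) = -(-1)^n`
because `|N| = (p - 1)/2` is odd for `p ≡ 3 mod 4`. Either way the weight at `a` is
`1 + χ(f_{Sᶜ}(a))`, the number of square roots of `f_{Sᶜ}(a)`; summing over `a` counts the
affine points of `y² = f_{Sᶜ}(x)`, and `|Sᶜ|` is even.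
-/

section QuadraticResidues

variable {p : ℕ}

theorem mem_Qset [NeZero p] {a : ZMod p} : a ∈ Qset p ↔ a ≠ 0 ∧ IsSquare a := by
  simp [Qset, isSquare_iff_exists_sq, eq_comm]

theorem mem_Nset [NeZero p] {a : ZMod p} : a ∈ Nset p ↔ a ≠ 0 ∧ ¬IsSquare a := by
  simp [Nset, isSquare_iff_exists_sq, eq_comm]

theorem card_filter_mem_Nset_add_card_filter_mem_Qset [NeZero p] {α : Type*} [DecidableEq α]
    (T : Finset α) (f : α → ZMod p) :
    #{x ∈ T | f x ∈ Nset p} + #{x ∈ T | f x ∈ Qset p} = #{x ∈ T | f x ≠ 0} := by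
  rw [← card_union_of_disjoint (disjoint_filter_filter' _ _ ?_), ← filter_or]
  · congr 1
    refine filter_congr fun x _ => ?_
    simp only [mem_Nset, mem_Qset]
    tauto
  · simp +contextual [Pi.disjoint_iff, mem_Nset, mem_Qset]

variable [Fact p.Prime]

theorem quadraticChar_eq_ite_mem_Nset {c : ZMod p} (hc : c ≠ 0) :
    quadraticChar (ZMod p) c = if c ∈ Nset p then -1 else 1 := by
  split_ifs with h
  · exact quadraticChar_neg_one_iff_not_isSquare.mpr (mem_Nset.mp h).2
  · exact (quadraticChar_one_iff_isSquare hc).mpr (by simpa [mem_Nset, hc] using h)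

theorem quadraticChar_eq_ite_mem_Qset_sub_ite_mem_Nset (c : ZMod p) :
    quadraticChar (ZMod p) c =
      (if c ∈ Qset p then 1 else 0) - (if c ∈ Nset p then 1 else 0) := by
  by_cases hc : c = 0
  · simp [hc, mem_Nset, mem_Qset]
  · rw [quadraticChar_eq_ite_mem_Nset hc]
    by_cases h : IsSquare c <;> simp [mem_Nset, mem_Qset, hc, h]

theorem card_Nset_add_card_Qset : #(Nset p) + #(Qset p) = p - 1 := by
  simpa [filter_ne', ZMod.card] using
    card_filter_mem_Nset_add_card_filter_mem_Qset (p := p) univ id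

theorem card_Qset_eq_card_Nset (hp : p ≠ 2) : #(Qset p) = #(Nset p) := by
  have hsum := quadraticChar_sum_zero (F := ZMod p) (by rwa [ZMod.ringChar_zmod_n])
  simp only [quadraticChar_eq_ite_mem_Qset_sub_ite_mem_Nset, sum_sub_distrib, sum_boole,
    filter_mem_eq_inter, univ_inter] at hsum
  exact_mod_cast sub_eq_zero.mp hsum

theorem odd_card_Nset (hp4 : p % 4 = 3) : Odd #(Nset p) := by
  have h1 := card_Nset_add_card_Qset (p := p)
  have h2 := card_Qset_eq_card_Nset (p := p) (by omega)
  rw [Nat.odd_iff]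
  omega

theorem quadraticChar_prod_sub {T : Finset (ZMod p)} {a : ZMod p} (ha : a ∉ T) :
    quadraticChar (ZMod p) (∏ b ∈ T, (a - b)) = (-1) ^ #{b ∈ T | a - b ∈ Nset p} := by
  have hne : ∀ b ∈ T, a - b ≠ 0 := fun b hb => sub_ne_zero.mpr fun h => ha (h ▸ hb)
  rw [map_prod, prod_congr rfl fun b hb => quadraticChar_eq_ite_mem_Nset (hne b hb), prod_ite,
    prod_const, prod_const_one, mul_one]

end QuadraticResidues

section Convolution

variable {p : ℕ} [NeZero p]

theorem wt_eq_sum_val (f : ZMod p → ZMod 2) : wt f = ∑ a, (f a).val := by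
  rw [wt, card_filter]
  refine sum_congr rfl fun a _ => ?_
  generalize f a = x
  fin_cases x <;> rfl

theorem conv_rOf_apply (A S : Finset (ZMod p)) (a : ZMod p) :
    conv (rOf A) (rOf S) a = #{s ∈ S | a - s ∈ A} := by
  rw [conv, ← (Equiv.subLeft a).sum_comp, card_filter, Nat.cast_sum]
  simp only [rOf, Equiv.subLeft_apply, sub_sub_cancel, mul_ite, mul_one, mul_zero, ← sum_filter,
    filter_mem_eq_inter, univ_inter, Nat.cast_ite, Nat.cast_one, Nat.cast_zero]

theorem card_filter_sub_mem_add_card_filter_compl (S A : Finset (ZMod p)) (a : ZMod p) :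
    #{s ∈ S | a - s ∈ A} + #{s ∈ Sᶜ | a - s ∈ A} = #A := by
  rw [← card_union_of_disjoint (disjoint_filter_filter disjoint_compl_right), ← filter_union,
    union_compl]
  exact card_nbij' (a - ·) (a - ·) (fun s hs => by simpa using hs) (fun t ht => by simpa using ht)
    (fun s _ => sub_sub_cancel a s) (fun t _ => sub_sub_cancel a t)

end Convolution

theorem natCard_sq_eq_add_sum_quadraticChar {F : Type*} [Field F] [Fintype F] [DecidableEq F]
    (hF : ringChar F ≠ 2) (f : F → F) :
    (Nat.card {xy : F × F // xy.2 ^ 2 = f xy.1} : ℤ) =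
      Fintype.card F + ∑ x, quadraticChar F (f x) := by
  rw [Nat.card_congr (Equiv.subtypeProdEquivSigmaSubtype fun x y => y ^ 2 = f x),
    Nat.card_eq_fintype_card, Fintype.card_sigma, Nat.cast_sum, Fintype.card_eq_sum_ones,
    Nat.cast_sum, ← sum_add_distrib]
  refine sum_congr rfl fun x _ => ?_
  rw [Nat.cast_one, add_comm, ← quadraticChar_card_sqrts hF, Set.toFinset_card]
  rfl

theorem val_conv_Nset_add_val_conv_Qset {p : ℕ} [Fact p.Prime] (hp4 : p % 4 = 3)
    {S : Finset (ZMod p)} (hS : Odd #S) (a : ZMod p) :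
    ((conv (rOf (Nset p)) (rOf S) a).val + (conv (rOf (Qset p)) (rOf S) a).val : ℤ) =
      1 + quadraticChar (ZMod p) (∏ b ∈ Sᶜ, (a - b)) := by
  rw [conv_rOf_apply, conv_rOf_apply, ZMod.val_natCast, ZMod.val_natCast]
  have hNQ := card_filter_mem_Nset_add_card_filter_mem_Qset S (a - ·)
  simp only [sub_ne_zero, filter_ne] at hNQ
  have hS2 := Nat.odd_iff.mp hS
  by_cases ha : a ∈ S
  · rw [card_erase_of_mem ha] at hNQ
    have hcompl := card_filter_sub_mem_add_card_filter_compl S (Nset p) a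
    have hN := Nat.odd_iff.mp (odd_card_Nset hp4)
    have hle : 1 ≤ #S := card_pos.mpr ⟨a, ha⟩
    rw [quadraticChar_prod_sub (notMem_compl.mpr ha)]
    rcases Nat.even_or_odd #{b ∈ Sᶜ | a - b ∈ Nset p} with h | h
    · rw [h.neg_one_pow]
      have := Nat.even_iff.mp h
      omega
    · rw [h.neg_one_pow]
      have := Nat.odd_iff.mp h
      omega
  · rw [erase_eq_of_notMem ha] at hNQ
    rw [prod_eq_zero (mem_compl.mpr ha) (sub_self a), MulChar.map_zero]
    omega

theorem qqr_weight_odd_three_mod_four_general (p : ℕ) [Fact p.Prime] (hp4 : p % 4 = 3)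
    (S : Finset (ZMod p)) (hodd : Odd S.card) :
    (wt2 (qqr p S) : ℤ) = (p : ℤ) + charSum p Sᶜ ∧
    (wt2 (qqr p S) : ℤ) = (Xcard p Sᶜ : ℤ) - 2 := by
  have hweight : (wt2 (qqr p S) : ℤ) = p + charSum p Sᶜ := by
    rw [wt2, qqr, wt_eq_sum_val, wt_eq_sum_val]
    push_cast
    rw [← sum_add_distrib, sum_congr rfl fun a _ => val_conv_Nset_add_val_conv_Qset hp4 hodd a,
      sum_add_distrib, charSum]
    simp
  have heven : Even #Sᶜ := by
    rw [card_compl, ZMod.card]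
    exact Nat.Odd.sub_odd (Nat.odd_iff.mpr (Nat.odd_of_mod_four_eq_three hp4)) hodd
  refine ⟨hweight, ?_⟩
  rw [hweight, Xcard, if_pos heven, Nat.cast_add,
    natCard_sq_eq_add_sum_quadraticChar (by rw [ZMod.ringChar_zmod_n]; omega)
      fun x => ∏ b ∈ Sᶜ, (x - b), ZMod.card, charSum]
  ring

/-- Weight of a QQR codeword for `|S|` odd and `p ≡ 3 (mod 4)`. -/
theorem qqr_weight_odd_three_mod_four (p : ℕ) [Fact p.Prime] (hp4 : p % 4 = 3)
    (S : Finset (ZMod p)) (hS : S ≠ Finset.univ) (hodd : Odd S.card) :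
    (wt2 (qqr p S) : ℤ) = (p : ℤ) + charSum p Sᶜ ∧
    (wt2 (qqr p S) : ℤ) = (Xcard p Sᶜ : ℤ) - 2 :=
  qqr_weight_odd_three_mod_four_general p hp4 S hodd
end

section
/- Let p be an odd prime. Every codeword of the QQR code C_NQ has even Hamming weight. -/
open Finset

lemma wt_cast {p : ℕ} [NeZero p] (f : ZMod p → ZMod 2) :
    (wt f : ZMod 2) = ∑ a : ZMod p, f a := by
  have h1 : ∀ x : ZMod 2, x ≠ 0 → x = 1 := by decide
  rw [wt, Finset.card_eq_sum_ones, Nat.cast_sum]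
  rw [← Finset.sum_filter_ne_zero Finset.univ]
  exact Finset.sum_congr rfl fun a ha => by
    simp only [Finset.mem_filter] at ha
    simp [h1 _ ha.2]

lemma sum_conv {p : ℕ} [NeZero p] (f g : ZMod p → ZMod 2) :
    ∑ a : ZMod p, conv f g a = (∑ a : ZMod p, f a) * (∑ a : ZMod p, g a) := by
  unfold conv
  rw [Finset.sum_comm, Finset.sum_mul]
  refine Finset.sum_congr rfl fun b _ => ?_
  rw [Finset.mul_sum]
  exact Fintype.sum_equiv (Equiv.subRight b) _ _ fun a => rfl

lemma sum_rOf {p : ℕ} (S : Finset (ZMod p)) [NeZero p] :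
    ∑ a : ZMod p, rOf S a = (S.card : ZMod 2) := by
  unfold rOf
  rw [Finset.sum_ite_mem, Finset.univ_inter, Finset.sum_const, nsmul_eq_mul, mul_one]

lemma card_N_add_Q (p : ℕ) [NeZero p] [DecidableEq (ZMod p)] :
    (Nset p).card + (Qset p).card = p - 1 := by
  classical
  have hN : Nset p = (Finset.univ.filter fun a : ZMod p => a ≠ 0).filter
      (fun a => ¬∃ b : ZMod p, b ^ 2 = a) := by
    ext a; simp [Nset]
  have hQ : Qset p = (Finset.univ.filter fun a : ZMod p => a ≠ 0).filter
      (fun a => ∃ b : ZMod p, b ^ 2 = a) := by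
    ext a; simp [Qset]
  rw [hN, hQ, Nat.add_comm, Finset.card_filter_add_card_filter_not]
  have : (Finset.univ.filter fun a : ZMod p => a ≠ 0) = ({0}ᶜ : Finset (ZMod p)) := by
    ext a; simp
  rw [this, Finset.card_compl, Finset.card_singleton, ZMod.card]

/-- The QQR code `C_NQ` is an even-weight code. -/
theorem qqr_even_weight (p : ℕ) [Fact p.Prime] (hp : p ≠ 2) :
    ∀ S : Finset (ZMod p), Even (wt2 (qqr p S)) := by
  intro S
  classical
  have hodd : Odd p := (Fact.out : p.Prime).odd_of_ne_two hp
  have key : ((wt2 (qqr p S) : ℕ) : ZMod 2) = 0 := by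
    show ((wt (qqr p S).1 + wt (qqr p S).2 : ℕ) : ZMod 2) = 0
    push_cast
    rw [wt_cast, wt_cast]
    show (∑ a, conv (rOf (Nset p)) (rOf S) a) + (∑ a, conv (rOf (Qset p)) (rOf S) a) = 0
    rw [sum_conv, sum_conv, ← add_mul, sum_rOf, sum_rOf, sum_rOf, ← Nat.cast_add,
      card_N_add_Q]
    have h2 : ((p - 1 : ℕ) : ZMod 2) = 0 := by
      have : (2 : ℕ) ∣ p - 1 := by
        obtain ⟨k, hk⟩ := hodd
        exact ⟨k, by omega⟩
      exact (ZMod.natCast_eq_zero_iff _ 2).mpr this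
    rw [h2, zero_mul]
  exact even_iff_two_dvd.mpr ((ZMod.natCast_eq_zero_iff _ 2).mp key)
end

section
/- Let p be a prime with p ≡ 1 (mod 4). Then for every S ⊆ GF(p): (i) r_N r_{S^c} = r_N r_S and r_Q r_{S^c} = r_Q r_S in R (so v_S = c_S); (ii) c_{S₁} + c_{S₂} = c_{S₁ Δ S₂} for all S₁, S₂ ⊆ GF(p), where Δ denotes symmetric difference. In particular the LQR code C is a binary linear code of dimension p − 1. -/
open Finset

/-! ### Auxiliary lemmas -/

section Aux
variable {p : ℕ} [NeZero p]

lemma conv_add_right (h f g : ZMod p → ZMod 2) :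
    conv h (f + g) = conv h f + conv h g := by
  funext a
  simp [conv, mul_add, Finset.sum_add_distrib]

lemma conv_smul_right (h : ZMod p → ZMod 2) (c : ZMod 2) (f : ZMod p → ZMod 2) :
    conv h (c • f) = c • conv h f := by
  funext a
  simp [conv, Finset.mul_sum, mul_left_comm]

/-- Convolution with a fixed function as a linear map. -/
def convL (h : ZMod p → ZMod 2) : (ZMod p → ZMod 2) →ₗ[ZMod 2] (ZMod p → ZMod 2) where
  toFun := conv h
  map_add' := conv_add_right h
  map_smul' := conv_smul_right h

@[simp] lemma convL_apply (h f : ZMod p → ZMod 2) : convL h f = conv h f := rfl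

lemma rOf_filter (f : ZMod p → ZMod 2) :
    rOf (Finset.univ.filter fun a => f a = 1) = f := by
  have h2 : ∀ x : ZMod 2, x = 0 ∨ x = 1 := by decide
  funext a
  rcases h2 (f a) with h | h <;> (simp [rOf, h]; try decide)

lemma rOf_compl (S : Finset (ZMod p)) : rOf Sᶜ = rOf S + (fun _ => 1) := by
  funext a
  by_cases h : a ∈ S <;> simp [rOf, h]; decide

lemma rOf_symmDiff (S₁ S₂ : Finset (ZMod p)) :
    rOf (symmDiff S₁ S₂) = rOf S₁ + rOf S₂ := by
  funext a
  by_cases h1 : a ∈ S₁ <;> by_cases h2 : a ∈ S₂ <;>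
    (simp [rOf, Finset.mem_symmDiff, h1, h2]; try decide)

lemma rOf_N_add_Q [Fact p.Prime] :
    rOf (Nset p) + rOf (Qset p) = fun a => if a = 0 then 0 else 1 := by
  funext a
  by_cases h0 : a = 0
  · simp [rOf, Nset, Qset, h0]
  · by_cases hs : ∃ b : ZMod p, b ^ 2 = a <;>
      simp [rOf, Nset, Qset, h0, hs]

end Aux

section Parity
variable {p : ℕ} [Fact p.Prime] (hp4 : p % 4 = 1)

include hp4 in
lemma ztwo_ne_zero : (2 : ZMod p) ≠ 0 := by
  have : ((2 : ℕ) : ZMod p) ≠ 0 := by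
    rw [Ne, ZMod.natCast_eq_zero_iff]
    intro h
    have := (Nat.prime_dvd_prime_iff_eq (Fact.out : p.Prime) Nat.prime_two).1 h
    omega
  simpa using this

include hp4 in
lemma neg_mem_Nset {a : ZMod p} (ha : a ∈ Nset p) : -a ∈ Nset p := by
  obtain ⟨c, hc⟩ := (ZMod.exists_sq_eq_neg_one_iff (p := p)).2 (by omega)
  simp only [Nset, Finset.mem_filter, Finset.mem_univ, true_and] at ha ⊢
  refine ⟨neg_ne_zero.2 ha.1, fun ⟨b, hb⟩ => ha.2 ⟨c * b, ?_⟩⟩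
  linear_combination (-1 : ZMod p) * hb + (-b ^ 2) * hc

include hp4 in
lemma neg_mem_Qset {a : ZMod p} (ha : a ∈ Qset p) : -a ∈ Qset p := by
  obtain ⟨c, hc⟩ := (ZMod.exists_sq_eq_neg_one_iff (p := p)).2 (by omega)
  simp only [Qset, Finset.mem_filter, Finset.mem_univ, true_and] at ha ⊢
  obtain ⟨h0, b, hb⟩ := ha
  refine ⟨neg_ne_zero.2 h0, c * b, ?_⟩
  linear_combination (-1 : ZMod p) * hb + (-b ^ 2) * hc

include hp4 in
/-- If `T` consists of nonzero elements and is closed under negation, then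
`∑_{b∈T} 1 = 0` in `ZMod 2` (i.e. `|T|` is even). -/
lemma sum_rOf_zero (T : Finset (ZMod p)) (hT0 : ∀ a ∈ T, a ≠ 0)
    (hTn : ∀ a ∈ T, -a ∈ T) : ∑ b : ZMod p, rOf T b = 0 := by
  have h : ∑ b : ZMod p, rOf T b = ∑ b ∈ T, (1 : ZMod 2) := by
    simp [rOf, Finset.sum_ite_mem]
  rw [h]
  refine Finset.sum_involution (fun a _ => -a)
    (fun a ha => by show (1 : ZMod 2) + 1 = 0; decide)
    (fun a ha _ hn => ?_) (fun a ha => hTn a ha) (fun a ha => neg_neg a)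
  apply hT0 a ha
  have h2 : (2 : ZMod p) * a = 0 := by
    have hn' : -a = a := hn
    linear_combination -hn'
  rcases mul_eq_zero.1 h2 with h | h
  · exact absurd h (ztwo_ne_zero hp4)
  · exact h

end Parity

section Aux2
variable {p : ℕ} [NeZero p]

lemma conv_add_left (g h f : ZMod p → ZMod 2) :
    conv (g + h) f = conv g f + conv h f := by
  funext a
  simp [conv, add_mul, Finset.sum_add_distrib]

lemma conv_indicator (f : ZMod p → ZMod 2) (a : ZMod p) :
    conv (fun b => if b = 0 then 0 else 1) f a = (∑ c, f c) + f a := by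
  show ∑ b : ZMod p, (if b = (0 : ZMod p) then (0 : ZMod 2) else 1) * f (a - b) = _
  have step : ∀ b : ZMod p, (if b = (0 : ZMod p) then (0 : ZMod 2) else 1) * f (a - b)
      = f (a - b) + (if b = 0 then f (a - b) else 0) := by
    intro b
    split
    · rw [zero_mul, CharTwo.add_self_eq_zero]
    · rw [one_mul, add_zero]
  rw [Finset.sum_congr rfl fun b _ => step b, Finset.sum_add_distrib]
  have h1 : ∑ x : ZMod p, f (a - x) = ∑ c : ZMod p, f c :=
    Fintype.sum_equiv (Equiv.subLeft a) _ _ (fun x => rfl)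
  rw [h1]
  congr 1
  simp

end Aux2

/-- For `p ≡ 1 (mod 4)`: `r_N r_{Sᶜ} = r_N r_S` and `r_Q r_{Sᶜ} = r_Q r_S`
(so `v_S = c_S`), `c_{S₁} + c_{S₂} = c_{S₁ Δ S₂}`, and the LQR code is a binary
linear code of dimension `p - 1`. -/
theorem lqr_linear_one_mod_four (p : ℕ) [Fact p.Prime] (hp4 : p % 4 = 1) :
    (∀ S : Finset (ZMod p),
      conv (rOf (Nset p)) (rOf Sᶜ) = conv (rOf (Nset p)) (rOf S) ∧
      conv (rOf (Qset p)) (rOf Sᶜ) = conv (rOf (Qset p)) (rOf S) ∧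
      lqr p S = (qqr p S, qqr p S)) ∧
    (∀ S₁ S₂ : Finset (ZMod p), lqr p S₁ + lqr p S₂ = lqr p (symmDiff S₁ S₂)) ∧
    (∃ C : Submodule (ZMod 2)
        (((ZMod p → ZMod 2) × (ZMod p → ZMod 2)) × ((ZMod p → ZMod 2) × (ZMod p → ZMod 2))),
      (C : Set (((ZMod p → ZMod 2) × (ZMod p → ZMod 2)) ×
          ((ZMod p → ZMod 2) × (ZMod p → ZMod 2)))) = Set.range (lqr p) ∧
      Module.finrank (ZMod 2) C = p - 1) := by
  have hNzero : conv (rOf (Nset p)) (fun _ => (1 : ZMod 2)) = 0 := by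
    funext a
    show ∑ b : ZMod p, rOf (Nset p) b * 1 = 0
    simp only [mul_one]
    exact sum_rOf_zero hp4 _ (fun a ha => (Finset.mem_filter.1 ha).2.1)
      (fun a ha => neg_mem_Nset hp4 ha)
  have hQzero : conv (rOf (Qset p)) (fun _ => (1 : ZMod 2)) = 0 := by
    funext a
    show ∑ b : ZMod p, rOf (Qset p) b * 1 = 0
    simp only [mul_one]
    exact sum_rOf_zero hp4 _ (fun a ha => (Finset.mem_filter.1 ha).2.1)
      (fun a ha => neg_mem_Qset hp4 ha)
  have part1 : ∀ S : Finset (ZMod p),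
      conv (rOf (Nset p)) (rOf Sᶜ) = conv (rOf (Nset p)) (rOf S) ∧
      conv (rOf (Qset p)) (rOf Sᶜ) = conv (rOf (Qset p)) (rOf S) ∧
      lqr p S = (qqr p S, qqr p S) := by
    intro S
    have hN : conv (rOf (Nset p)) (rOf Sᶜ) = conv (rOf (Nset p)) (rOf S) := by
      rw [rOf_compl, conv_add_right, hNzero, add_zero]
    have hQ : conv (rOf (Qset p)) (rOf Sᶜ) = conv (rOf (Qset p)) (rOf S) := by
      rw [rOf_compl, conv_add_right, hQzero, add_zero]
    refine ⟨hN, hQ, ?_⟩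
    unfold lqr qqr
    rw [hN, hQ]
  have qadd : ∀ S₁ S₂ : Finset (ZMod p), qqr p S₁ + qqr p S₂ = qqr p (symmDiff S₁ S₂) := by
    intro S₁ S₂
    simp only [qqr, rOf_symmDiff, conv_add_right, Prod.mk_add_mk]
  have part2 : ∀ S₁ S₂ : Finset (ZMod p),
      lqr p S₁ + lqr p S₂ = lqr p (symmDiff S₁ S₂) := by
    intro S₁ S₂
    rw [(part1 S₁).2.2, (part1 S₂).2.2, (part1 (symmDiff S₁ S₂)).2.2, Prod.mk_add_mk, qadd]
  set rN := rOf (Nset p) with hrN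
  set rQ := rOf (Qset p) with hrQ
  set L : (ZMod p → ZMod 2) →ₗ[ZMod 2]
      (((ZMod p → ZMod 2) × (ZMod p → ZMod 2)) × ((ZMod p → ZMod 2) × (ZMod p → ZMod 2))) :=
    LinearMap.prod (LinearMap.prod (convL rN) (convL rQ))
      (LinearMap.prod (convL rN) (convL rQ)) with hL
  have hLapp : ∀ f : ZMod p → ZMod 2, L f = ((conv rN f, conv rQ f), (conv rN f, conv rQ f)) :=
    fun f => rfl
  have hlqrL : ∀ S : Finset (ZMod p), lqr p S = L (rOf S) := by
    intro S
    rw [(part1 S).2.2, hLapp]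
    rfl
  refine ⟨part1, part2, LinearMap.range L, ?_, ?_⟩
  · ext x
    simp only [SetLike.mem_coe, LinearMap.mem_range, Set.mem_range]
    constructor
    · rintro ⟨f, rfl⟩
      exact ⟨Finset.univ.filter fun a => f a = 1, by rw [hlqrL, rOf_filter]⟩
    · rintro ⟨S, rfl⟩
      exact ⟨rOf S, (hlqrL S).symm⟩
  · have hdom : Module.finrank (ZMod 2) (ZMod p → ZMod 2) = p := by
      rw [Module.finrank_pi, ZMod.card]
    have hker : LinearMap.ker L = Submodule.span (ZMod 2)
        {(fun _ => (1 : ZMod 2) : ZMod p → ZMod 2)} := by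
      apply le_antisymm
      · intro f hf
        rw [LinearMap.mem_ker, hLapp, Prod.ext_iff, Prod.ext_iff] at hf
        have hfN : conv rN f = 0 := hf.1.1
        have hfQ : conv rQ f = 0 := hf.1.2
        have hkey : ∀ a, f a = ∑ c, f c := by
          intro a
          have h1 : conv (rN + rQ) f a = 0 := by
            rw [conv_add_left, hfN, hfQ]
            simp
          have h2 : conv (rN + rQ) f a = (∑ c, f c) + f a := by
            rw [hrN, hrQ, rOf_N_add_Q, conv_indicator]
          rw [h2] at h1
          have := eq_neg_of_add_eq_zero_right h1
          rw [this, CharTwo.neg_eq]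
        have hf1 : f = (∑ c, f c) • (fun _ => (1 : ZMod 2)) := by
          funext a
          simp [hkey a]
        rw [hf1]
        exact Submodule.smul_mem _ _ (Submodule.mem_span_singleton_self _)
      · rw [Submodule.span_le, Set.singleton_subset_iff, SetLike.mem_coe, LinearMap.mem_ker,
          hLapp, hNzero, hQzero]
        rfl
    have hk1 : Module.finrank (ZMod 2) (LinearMap.ker L) = 1 := by
      rw [hker]
      refine finrank_span_singleton ?_
      intro h
      have := congrFun h 0
      simp at this
    have hrank := LinearMap.finrank_range_add_finrank_ker L
    rw [hdom, hk1] at hrank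
    have hp1 : 1 ≤ p := (Fact.out : p.Prime).one_lt.le
    omega
end

section
/- Let p be a prime with p ≡ 1 (mod 4) and let S ⊆ GF(p) be non-empty with |S| even. Then the Hamming weight of the LQR codeword c_S satisfies wt(c_S) = 2p − 2·Σ_{a∈GF(p)} χ(f_S(a)) = 2·(2p + 2 − |X_S(GF(p))|). -/
open Finset

section LQRAux

variable {p : ℕ} [Fact p.Prime]

private lemma mem_Nset_iff' (b : ZMod p) :
    b ∈ Nset p ↔ quadraticChar (ZMod p) b = -1 := by
  rw [Nset, Finset.mem_filter]
  constructor
  · rintro ⟨-, hb0, hsq⟩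
    rw [quadraticChar_neg_one_iff_not_isSquare]
    rintro ⟨r, hr⟩
    exact hsq ⟨r, by rw [sq, hr]⟩
  · intro h
    have hsq := quadraticChar_neg_one_iff_not_isSquare.mp h
    refine ⟨Finset.mem_univ _, ?_, ?_⟩
    · rintro rfl
      rw [quadraticChar_zero] at h
      exact absurd h (by norm_num)
    · rintro ⟨c, hc⟩
      exact hsq ⟨c, by rw [← hc, sq]⟩

private lemma mem_Qset_iff' (b : ZMod p) :
    b ∈ Qset p ↔ quadraticChar (ZMod p) b = 1 := by
  rw [Qset, Finset.mem_filter]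
  constructor
  · rintro ⟨-, hb0, c, hc⟩
    rw [quadraticChar_one_iff_isSquare hb0]
    exact ⟨c, by rw [← hc, sq]⟩
  · intro h
    have hb0 : b ≠ 0 := by
      rintro rfl
      rw [quadraticChar_zero] at h
      exact absurd h (by norm_num)
    obtain ⟨r, hr⟩ := (quadraticChar_one_iff_isSquare hb0).mp h
    exact ⟨Finset.mem_univ _, hb0, r, by rw [sq, hr]⟩

private lemma conv_rOf (T S : Finset (ZMod p)) (a : ZMod p) :
    conv (rOf T) (rOf S) a = (((S.filter fun c => a - c ∈ T).card : ℕ) : ZMod 2) := by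
  unfold conv rOf
  have h1 : ∀ b : ZMod p, (if b ∈ T then (1 : ZMod 2) else 0) * (if a - b ∈ S then 1 else 0)
      = if (b ∈ T ∧ a - b ∈ S) then 1 else 0 := by
    intro b
    by_cases h1 : b ∈ T <;> by_cases h2 : a - b ∈ S <;> simp [h1, h2]
  rw [Finset.sum_congr rfl fun b _ => h1 b, Finset.sum_boole]
  congr 1
  have himg : (Finset.univ.filter fun b : ZMod p => b ∈ T ∧ a - b ∈ S)
      = (S.filter fun c => a - c ∈ T).image (fun c => a - c) := by
    ext b
    simp only [Finset.mem_filter, Finset.mem_univ, true_and, Finset.mem_image]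
    constructor
    · rintro ⟨hbT, hbs⟩
      exact ⟨a - b, ⟨hbs, by simpa [sub_sub_cancel] using hbT⟩, sub_sub_cancel a b⟩
    · rintro ⟨c, ⟨hcS, hcT⟩, rfl⟩
      exact ⟨hcT, by simpa [sub_sub_cancel] using hcS⟩
  rw [himg, Finset.card_image_of_injective _ sub_right_injective]

private lemma conv_N (S : Finset (ZMod p)) (a : ZMod p) :
    conv (rOf (Nset p)) (rOf S) a
      = (((S.filter fun c => quadraticChar (ZMod p) (a - c) = -1).card : ℕ) : ZMod 2) := by
  rw [conv_rOf]
  congr 2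
  exact Finset.filter_congr fun c _ => by rw [mem_Nset_iff']

private lemma conv_Q (S : Finset (ZMod p)) (a : ZMod p) :
    conv (rOf (Qset p)) (rOf S) a
      = (((S.filter fun c => quadraticChar (ZMod p) (a - c) = 1).card : ℕ) : ZMod 2) := by
  rw [conv_rOf]
  congr 2
  exact Finset.filter_congr fun c _ => by rw [mem_Qset_iff']

private lemma zmod2_ne_zero (n : ℕ) : ((n : ZMod 2) ≠ 0) ↔ Odd n := by
  rw [Ne, ZMod.natCast_eq_zero_iff, Nat.odd_iff]
  omega

private lemma chi_prod_mem (S : Finset (ZMod p)) (a : ZMod p) (ha : a ∈ S) :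
    quadraticChar (ZMod p) (∏ b ∈ S, (a - b)) = 0 := by
  rw [Finset.prod_eq_zero ha (by rw [sub_self]), quadraticChar_zero]

private lemma chi_prod_not_mem (S : Finset (ZMod p)) (a : ZMod p) (ha : a ∉ S) :
    quadraticChar (ZMod p) (∏ b ∈ S, (a - b))
      = (-1) ^ (S.filter fun b => quadraticChar (ZMod p) (a - b) = -1).card := by
  rw [map_prod]
  rw [← Finset.prod_filter_mul_prod_filter_not S
    (fun b => quadraticChar (ZMod p) (a - b) = -1)]
  rw [Finset.prod_congr rfl (fun b hb => (Finset.mem_filter.mp hb).2), Finset.prod_const]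
  rw [Finset.prod_eq_one, mul_one]
  intro b hb
  rw [Finset.mem_filter] at hb
  have hab : a - b ≠ 0 := by
    intro h
    exact ha ((sub_eq_zero.mp h) ▸ hb.1)
  rcases quadraticChar_dichotomy hab with h | h
  · exact h
  · exact absurd h hb.2

private lemma count_partition (S : Finset (ZMod p)) (a : ZMod p) :
    (S.filter fun b => quadraticChar (ZMod p) (a - b) = 1).card
      + (S.filter fun b => quadraticChar (ZMod p) (a - b) = -1).card
      + (if a ∈ S then 1 else 0) = S.card := by
  have h1 := Finset.card_filter_add_card_filter_not
    (s := S) (p := fun b => quadraticChar (ZMod p) (a - b) = 1)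
  have h2 := Finset.card_filter_add_card_filter_not
    (s := S.filter fun b => ¬ quadraticChar (ZMod p) (a - b) = 1)
    (p := fun b => quadraticChar (ZMod p) (a - b) = -1)
  rw [Finset.filter_filter, Finset.filter_filter] at h2
  have e1 : (S.filter fun b => ¬ quadraticChar (ZMod p) (a - b) = 1
      ∧ quadraticChar (ZMod p) (a - b) = -1)
      = S.filter fun b => quadraticChar (ZMod p) (a - b) = -1 := by
    apply Finset.filter_congr
    intro b _
    constructor
    · exact fun h => h.2
    · exact fun h => ⟨by rw [h]; norm_num, h⟩
  have e2 : (S.filter fun b => ¬ quadraticChar (ZMod p) (a - b) = 1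
      ∧ ¬ quadraticChar (ZMod p) (a - b) = -1)
      = S.filter fun b => b = a := by
    apply Finset.filter_congr
    intro b _
    constructor
    · rintro ⟨h1', h2'⟩
      by_contra hba
      have hab : a - b ≠ 0 := fun h => hba (sub_eq_zero.mp h).symm
      rcases quadraticChar_dichotomy hab with h | h
      · exact h1' h
      · exact h2' h
    · rintro rfl
      rw [sub_self, quadraticChar_zero]
      norm_num
  rw [e1, e2] at h2
  have e3 : (S.filter fun b => b = a).card = if a ∈ S then 1 else 0 := by
    rw [Finset.filter_eq']
    split <;> simp
  omega

private lemma count_compl (S : Finset (ZMod p)) (P : ZMod p → Prop) [DecidablePred P] :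
    (S.filter P).card + (Sᶜ.filter P).card = (Finset.univ.filter P).card := by
  rw [← Finset.card_union_of_disjoint
    (Finset.disjoint_filter_filter disjoint_compl_right),
    ← Finset.filter_union, Finset.union_compl]

private lemma count_univ_shift (a : ZMod p) (e : ℤ) :
    (Finset.univ.filter fun b : ZMod p => quadraticChar (ZMod p) (a - b) = e).card
      = (Finset.univ.filter fun d : ZMod p => quadraticChar (ZMod p) d = e).card := by
  have himg : (Finset.univ.filter fun d : ZMod p => quadraticChar (ZMod p) d = e)
      = (Finset.univ.filter fun b : ZMod p => quadraticChar (ZMod p) (a - b) = e).image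
        (fun b => a - b) := by
    ext d
    simp only [Finset.mem_filter, Finset.mem_univ, true_and, Finset.mem_image]
    constructor
    · intro hd
      exact ⟨a - d, by rwa [sub_sub_cancel], sub_sub_cancel a d⟩
    · rintro ⟨b, hb, rfl⟩
      exact hb
  rw [himg, Finset.card_image_of_injective _ sub_right_injective]

private lemma count_global (hchar : ringChar (ZMod p) ≠ 2) :
    (Finset.univ.filter fun d : ZMod p => quadraticChar (ZMod p) d = 1).card
      = (Finset.univ.filter fun d : ZMod p => quadraticChar (ZMod p) d = -1).card
    ∧ (Finset.univ.filter fun d : ZMod p => quadraticChar (ZMod p) d = 1).card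
      + (Finset.univ.filter fun d : ZMod p => quadraticChar (ZMod p) d = -1).card
      + 1 = p := by
  have h0 := quadraticChar_sum_zero hchar
  have hpt : ∀ d : ZMod p, quadraticChar (ZMod p) d
      = (if quadraticChar (ZMod p) d = 1 then (1 : ℤ) else 0)
        - (if quadraticChar (ZMod p) d = -1 then (1 : ℤ) else 0) := by
    intro d
    by_cases hd : d = 0
    · rw [hd, quadraticChar_zero]; norm_num
    · rcases quadraticChar_dichotomy hd with h | h <;> rw [h] <;> norm_num
  rw [Finset.sum_congr rfl fun d _ => hpt d, Finset.sum_sub_distrib,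
    Finset.sum_boole, Finset.sum_boole, sub_eq_zero] at h0
  have heq : (Finset.univ.filter fun d : ZMod p => quadraticChar (ZMod p) d = 1).card
      = (Finset.univ.filter fun d : ZMod p => quadraticChar (ZMod p) d = -1).card := by
    exact_mod_cast h0
  refine ⟨heq, ?_⟩
  have hpt2 : ∀ d : ZMod p,
      (if quadraticChar (ZMod p) d = 1 then (1 : ℕ) else 0)
        + (if quadraticChar (ZMod p) d = -1 then (1 : ℕ) else 0)
        + (if d = 0 then (1 : ℕ) else 0) = 1 := by
    intro d
    by_cases hd : d = 0
    · rw [hd, quadraticChar_zero]; norm_num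
    · rcases quadraticChar_dichotomy hd with h | h <;> rw [h] <;> simp [hd]
  have hsum : ∑ d : ZMod p,
      ((if quadraticChar (ZMod p) d = 1 then (1 : ℕ) else 0)
        + (if quadraticChar (ZMod p) d = -1 then (1 : ℕ) else 0)
        + (if d = 0 then (1 : ℕ) else 0)) = p := by
    rw [Finset.sum_congr rfl fun d _ => hpt2 d, Finset.sum_const, Finset.card_univ,
      ZMod.card, smul_eq_mul, mul_one]
  rw [Finset.sum_add_distrib, Finset.sum_add_distrib] at hsum
  have c1 : ∑ d : ZMod p, (if quadraticChar (ZMod p) d = 1 then (1 : ℕ) else 0)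
      = (Finset.univ.filter fun d : ZMod p => quadraticChar (ZMod p) d = 1).card := by
    exact_mod_cast Finset.sum_boole _ _
  have c2 : ∑ d : ZMod p, (if quadraticChar (ZMod p) d = -1 then (1 : ℕ) else 0)
      = (Finset.univ.filter fun d : ZMod p => quadraticChar (ZMod p) d = -1).card := by
    exact_mod_cast Finset.sum_boole _ _
  have c3 : ∑ d : ZMod p, (if d = 0 then (1 : ℕ) else 0) = 1 := by
    rw [Finset.sum_ite_eq' Finset.univ (0 : ZMod p) (fun _ => (1 : ℕ))]
    simp
  rw [c1, c2, c3] at hsum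
  exact hsum

private lemma wt_conv_N (S : Finset (ZMod p)) :
    (wt (conv (rOf (Nset p)) (rOf S)) : ℤ)
      = ∑ a : ZMod p,
        if Odd ((S.filter fun c => quadraticChar (ZMod p) (a - c) = -1).card)
        then (1 : ℤ) else 0 := by
  unfold wt
  rw [Finset.natCast_card_filter]
  refine Finset.sum_congr rfl fun a _ => ?_
  rw [conv_N S a, if_congr (zmod2_ne_zero _) rfl rfl]

private lemma wt_conv_Q (S : Finset (ZMod p)) :
    (wt (conv (rOf (Qset p)) (rOf S)) : ℤ)
      = ∑ a : ZMod p,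
        if Odd ((S.filter fun c => quadraticChar (ZMod p) (a - c) = 1).card)
        then (1 : ℤ) else 0 := by
  unfold wt
  rw [Finset.natCast_card_filter]
  refine Finset.sum_congr rfl fun a _ => ?_
  rw [conv_Q S a, if_congr (zmod2_ne_zero _) rfl rfl]

private lemma ite_parity (n q n' q' : ℕ) (hn : (n + n') % 2 = 0) (hq : (q + q') % 2 = 0) :
    ((if Odd n then (1 : ℤ) else 0) + (if Odd q then 1 else 0))
      + ((if Odd n' then (1 : ℤ) else 0) + (if Odd q' then 1 else 0))
      = 2 * ((if Odd n then (1 : ℤ) else 0) + (if Odd q then 1 else 0)) := by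
  have h1 : Odd n' ↔ Odd n := by rw [Nat.odd_iff, Nat.odd_iff]; omega
  have h2 : Odd q' ↔ Odd q := by rw [Nat.odd_iff, Nat.odd_iff]; omega
  rw [if_congr h1 rfl rfl, if_congr h2 rfl rfl]
  ring

end LQRAux

/-- Weight of the LQR codeword `c_S` for `p ≡ 1 (mod 4)` and `|S|` even. -/
theorem lqr_weight_one_mod_four (p : ℕ) [Fact p.Prime] (hp4 : p % 4 = 1)
    (S : Finset (ZMod p)) (hS : S.Nonempty) (heven : Even S.card) :
    (wt4 (lqr p S) : ℤ) = 2 * (p : ℤ) - 2 * charSum p S ∧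
    (wt4 (lqr p S) : ℤ) = 2 * (2 * (p : ℤ) + 2 - (Xcard p S : ℤ)) := by
  have hp2 : p ≠ 2 := by rintro rfl; omega
  have hchar : ringChar (ZMod p) ≠ 2 := by rw [ZMod.ringChar_zmod_n]; exact hp2
  obtain ⟨hPeq, hPsum⟩ := count_global (p := p) hchar
  -- the weight as a sum of parity indicators
  have hwt4 : (wt4 (lqr p S) : ℤ)
      = ∑ a : ZMod p,
        (((if Odd ((S.filter fun c => quadraticChar (ZMod p) (a - c) = -1).card)
            then (1 : ℤ) else 0)
          + (if Odd ((S.filter fun c => quadraticChar (ZMod p) (a - c) = 1).card)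
            then (1 : ℤ) else 0))
        + ((if Odd ((Sᶜ.filter fun c => quadraticChar (ZMod p) (a - c) = -1).card)
            then (1 : ℤ) else 0)
          + (if Odd ((Sᶜ.filter fun c => quadraticChar (ZMod p) (a - c) = 1).card)
            then (1 : ℤ) else 0))) := by
    have e : wt4 (lqr p S)
        = wt (conv (rOf (Nset p)) (rOf S)) + wt (conv (rOf (Qset p)) (rOf S))
          + (wt (conv (rOf (Nset p)) (rOf Sᶜ)) + wt (conv (rOf (Qset p)) (rOf Sᶜ))) := rfl
    rw [e]
    push_cast
    rw [wt_conv_N, wt_conv_Q, wt_conv_N, wt_conv_Q, ← Finset.sum_add_distrib,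
      ← Finset.sum_add_distrib, ← Finset.sum_add_distrib]
  -- per-coordinate identity
  have key : ∀ a : ZMod p,
      (((if Odd ((S.filter fun c => quadraticChar (ZMod p) (a - c) = -1).card)
          then (1 : ℤ) else 0)
        + (if Odd ((S.filter fun c => quadraticChar (ZMod p) (a - c) = 1).card)
          then (1 : ℤ) else 0))
      + ((if Odd ((Sᶜ.filter fun c => quadraticChar (ZMod p) (a - c) = -1).card)
          then (1 : ℤ) else 0)
        + (if Odd ((Sᶜ.filter fun c => quadraticChar (ZMod p) (a - c) = 1).card)
          then (1 : ℤ) else 0)))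
      = 2 - 2 * quadraticChar (ZMod p) (∏ b ∈ S, (a - b)) := by
    intro a
    have hnn : (S.filter fun c => quadraticChar (ZMod p) (a - c) = -1).card
        + (Sᶜ.filter fun c => quadraticChar (ZMod p) (a - c) = -1).card
        = (Finset.univ.filter fun d : ZMod p => quadraticChar (ZMod p) d = -1).card := by
      rw [count_compl]; exact count_univ_shift a (-1)
    have hqq : (S.filter fun c => quadraticChar (ZMod p) (a - c) = 1).card
        + (Sᶜ.filter fun c => quadraticChar (ZMod p) (a - c) = 1).card
        = (Finset.univ.filter fun d : ZMod p => quadraticChar (ZMod p) d = 1).card := by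
      rw [count_compl]; exact count_univ_shift a 1
    have hnmod : ((S.filter fun c => quadraticChar (ZMod p) (a - c) = -1).card
        + (Sᶜ.filter fun c => quadraticChar (ZMod p) (a - c) = -1).card) % 2 = 0 := by
      omega
    have hqmod : ((S.filter fun c => quadraticChar (ZMod p) (a - c) = 1).card
        + (Sᶜ.filter fun c => quadraticChar (ZMod p) (a - c) = 1).card) % 2 = 0 := by
      omega
    rw [ite_parity _ _ _ _ hnmod hqmod]
    have hpart := count_partition S a
    have hsc : S.card % 2 = 0 := Nat.even_iff.mp heven
    by_cases haS : a ∈ S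
    · rw [chi_prod_mem S a haS]
      rw [if_pos haS] at hpart
      rcases Nat.even_or_odd ((S.filter fun c => quadraticChar (ZMod p) (a - c) = -1).card)
        with he | ho
      · have hqo : Odd (S.filter fun c => quadraticChar (ZMod p) (a - c) = 1).card := by
          rw [Nat.odd_iff]
          rw [Nat.even_iff] at he
          omega
        rw [if_neg (Nat.not_odd_iff_even.mpr he), if_pos hqo]
        norm_num
      · have hqe : ¬ Odd (S.filter fun c => quadraticChar (ZMod p) (a - c) = 1).card := by
          rw [Nat.odd_iff] at ho ⊢
          omega
        rw [if_pos ho, if_neg hqe]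
        norm_num
    · rw [chi_prod_not_mem S a haS]
      rw [if_neg haS] at hpart
      rcases Nat.even_or_odd ((S.filter fun c => quadraticChar (ZMod p) (a - c) = -1).card)
        with he | ho
      · have hqe : ¬ Odd (S.filter fun c => quadraticChar (ZMod p) (a - c) = 1).card := by
          rw [Nat.even_iff] at he
          rw [Nat.odd_iff]
          omega
        rw [if_neg (Nat.not_odd_iff_even.mpr he), if_neg hqe, Even.neg_one_pow he]
        norm_num
      · have hqo : Odd (S.filter fun c => quadraticChar (ZMod p) (a - c) = 1).card := by
          rw [Nat.odd_iff] at ho ⊢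
          omega
        rw [if_pos ho, if_pos hqo, Odd.neg_one_pow ho]
        norm_num
  have key1 : (wt4 (lqr p S) : ℤ) = 2 * (p : ℤ) - 2 * charSum p S := by
    rw [hwt4, Finset.sum_congr rfl fun a _ => key a, Finset.sum_sub_distrib,
      Finset.sum_const, Finset.card_univ, ZMod.card, ← Finset.mul_sum, charSum]
    push_cast
    ring
  -- point count of the curve
  have hX : (Xcard p S : ℤ) = (p : ℤ) + charSum p S + 2 := by
    rw [Xcard, if_pos heven]
    have hcount : (Nat.card {xy : ZMod p × ZMod p // xy.2 ^ 2 = ∏ b ∈ S, (xy.1 - b)} : ℤ)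
        = (p : ℤ) + charSum p S := by
      rw [Nat.card_eq_fintype_card, Fintype.card_subtype]
      have expand : ((Finset.univ.filter fun xy : ZMod p × ZMod p =>
          xy.2 ^ 2 = ∏ b ∈ S, (xy.1 - b)).card : ℤ)
          = ∑ x : ZMod p, ∑ y : ZMod p,
            if y ^ 2 = ∏ b ∈ S, (x - b) then (1 : ℤ) else 0 := by
        rw [Finset.natCast_card_filter, ← Finset.univ_product_univ, Finset.sum_product]
      rw [expand]
      have inner : ∀ x : ZMod p,
          (∑ y : ZMod p, if y ^ 2 = ∏ b ∈ S, (x - b) then (1 : ℤ) else 0)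
          = quadraticChar (ZMod p) (∏ b ∈ S, (x - b)) + 1 := by
        intro x
        rw [Finset.sum_boole]
        have h := quadraticChar_card_sqrts hchar (∏ b ∈ S, (x - b))
        rwa [Set.toFinset_setOf] at h
      rw [Finset.sum_congr rfl fun x _ => inner x, Finset.sum_add_distrib,
        Finset.sum_const, Finset.card_univ, ZMod.card, charSum]
      push_cast
      ring
    push_cast
    rw [hcount]
  refine ⟨key1, ?_⟩
  rw [key1, hX]
  ring
end
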